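/- Let α, β, γ ∈ ℝ, q ∈ [-1,1], and in the algebra Q set W_1 = E + βD_qFD_q, W_2 = E + βFD_q², W_3 = E + qβFD_q², R = (W_1 + γD_q)W_2 + αD_q², Q' = (1-q)D_qW_2 - βD_q². Then for X ∈ {R, Q'}: D_q W_1^{-1} X F W_2 W_3 = X (E + q F D_q W_2). -/

import Mathlib

open Polynomial

noncomputable section

/-- The underlying set of the algebra `Q`: infinite sequences of real polynomials. -/
abbrev PolySeq : Type := ℕ → Polynomial ℝ

/-- Multiplication in the algebra `Q`: `(qmul P Q)_k = ∑_{j ≤ deg Q_k} [Q_k]_j • P_j`. -/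
def qmul (P Q : PolySeq) : PolySeq := fun k => (Q k).sum fun j c => c • P j

/-- The identity `E = (1, x, x², …)`. -/
def Eseq : PolySeq := fun n => X ^ n

/-- `D = (0, 1, x, x², …)`. -/
def Dseq : PolySeq := fun n => if n = 0 then 0 else X ^ (n - 1)

/-- `F = (x, x², x³, …)`. -/
def Fseq : PolySeq := fun n => X ^ (n + 1)

/-- Powers in the algebra `Q`. -/
def qpow (P : PolySeq) : ℕ → PolySeq
  | 0 => Eseq
  | k + 1 => qmul P (qpow P k)

/-- The `q`-number `[n]_q = 1 + q + … + q^{n-1}`, with `[0]_q = 0`. -/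
def qnum (q : ℝ) (n : ℕ) : ℝ := ∑ i ∈ Finset.range n, q ^ i

/-- The q-derivative element `D_q = ([0]_q, [1]_q, [2]_q x, [3]_q x², …)`. -/
def Dq (q : ℝ) : PolySeq := fun n => C (qnum q n) * X ^ (n - 1)

/-- `D_q²`. -/
def Dq2 (q : ℝ) : PolySeq := qmul (Dq q) (Dq q)

/-- `W₁ = E + β D_q F D_q`. -/
def W1 (β q : ℝ) : PolySeq := Eseq + β • qmul (qmul (Dq q) Fseq) (Dq q)

/-- `W₂ = E + β F D_q²`. -/
def W2 (β q : ℝ) : PolySeq := Eseq + β • qmul Fseq (Dq2 q)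

/-- `W₃ = E + qβ F D_q²`. -/
def W3 (β q : ℝ) : PolySeq := Eseq + (q * β) • qmul Fseq (Dq2 q)

/-- `W₄ = E + β D_q² F`. -/
def W4 (β q : ℝ) : PolySeq := Eseq + β • qmul (Dq2 q) Fseq

/-- `R = (W₁ + γ D_q) W₂ + α D_q²`. -/
def RelQ (α β γ q : ℝ) : PolySeq := qmul (W1 β q + γ • Dq q) (W2 β q) + α • Dq2 q

/-- `Q' = (1-q) D_q W₂ - β D_q²`. -/
def Qel (β q : ℝ) : PolySeq := (1 - q) • qmul (Dq q) (W2 β q) - β • Dq2 q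

/-- `S(z) = R + z (D - Q')`. -/
def Sel (α β γ q z : ℝ) : PolySeq := RelQ α β γ q + z • (Dseq - Qel β q)

/-!
Identify a sequence `P` with the linear endomorphism `X ^ n ↦ P n` of `ℝ[X]`; this turns `qmul`
into composition, so the identity may be proved in any `ℝ`-algebra in which `D F = q F D + 1`.
There `D W₁ = W₄ D` and `D W₂ = W₁ D` by associativity alone, and the commutation rule gives
`D F W₂ W₃ = W₂ (E + q F D W₂)`. Together these yield `D X F W₂ W₃ = W₄ X (E + q F D W₂)` for every
`X` in the span of `W₁ W₂`, `D W₂` and `D²`, which contains `R` and `Q'`. Multiplying the left-hand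
side of the claim by `W₄` on the left turns `D W₁⁻¹` into `D`, and `W₄ = E + β D² F` is
left-cancellable because `D² F` lowers degrees.
-/

theorem qnum_succ (q : ℝ) (n : ℕ) : qnum q (n + 1) = q * qnum q n + 1 := by
  simp only [qnum, Finset.sum_range_succ', pow_succ', Finset.mul_sum, pow_zero]

theorem Polynomial.lhom_ext_X_pow {R M : Type*} [CommSemiring R] [AddCommMonoid M] [Module R M]
    {f g : R[X] →ₗ[R] M} (h : ∀ n, f (X ^ n) = g (X ^ n)) : f = g :=
  lhom_ext' fun n => LinearMap.ext_ring <| by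
    simpa only [LinearMap.comp_apply, ← X_pow_eq_monomial] using h n

section QWeyl

variable {A : Type*} [Ring A] [Algebra ℝ A] {q : ℝ} {d f : A}

theorem qWeyl_mul_W₂_mul_W₃ (hdf : d * f = q • (f * d) + 1) (β : ℝ) :
    d * f * (1 + β • (f * (d * d))) * (1 + (q * β) • (f * (d * d))) =
      (1 + β • (f * (d * d))) * (1 + q • (f * d * (1 + β • (f * (d * d))))) := by
  -- both sides are polynomials in `N = F D²` and `M = F D` once `N M` is put in the order `M N`
  have hNM : f * (d * d) * (f * d) = q • (f * d * (f * (d * d))) + f * (d * d) := by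
    calc f * (d * d) * (f * d) = f * d * (d * f) * d := by noncomm_ring
      _ = _ := by
        rw [hdf]
        simp only [mul_add, add_mul, mul_smul_comm, smul_mul_assoc, mul_one, mul_assoc]
  rw [hdf]
  generalize f * (d * d) = N at hNM ⊢
  generalize f * d = M at hNM ⊢
  simp only [mul_add, add_mul, smul_mul_assoc, mul_smul_comm, one_mul, mul_one, ← mul_assoc, hNM]
  module

theorem mul_span_mul_eq {w₁ w₂ w₄ s t : A} (h₁ : d * w₁ = w₄ * d) (h₂ : d * w₂ = w₁ * d)
    (hs : d * s = w₂ * t) (a b c : ℝ) :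
    d * (a • (w₁ * w₂) + b • (d * w₂) + c • (d * d)) * s =
      w₄ * (a • (w₁ * w₂) + b • (d * w₂) + c • (d * d)) * t := by
  have r₁ (x : A) : d * (w₁ * x) = w₄ * (d * x) := by rw [← mul_assoc, h₁, mul_assoc]
  have r₂ (x : A) : d * (w₂ * x) = w₁ * (d * x) := by rw [← mul_assoc, h₂, mul_assoc]
  simp only [mul_add, add_mul, mul_smul_comm, smul_mul_assoc, mul_assoc, r₁, r₂, hs]

theorem qWeyl_mul_inv_W₁_mul_eq (hdf : d * f = q • (f * d) + 1) {α β γ : ℝ}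
    {w₁ w₂ w₃ w₄ w₁' x : A} (hw₁ : w₁ = 1 + β • (d * f * d)) (hw₂ : w₂ = 1 + β • (f * (d * d)))
    (hw₃ : w₃ = 1 + (q * β) • (f * (d * d))) (hw₄ : w₄ = 1 + β • (d * d * f))
    (hw₄_reg : IsLeftRegular w₄) (hw₁' : w₁ * w₁' = 1)
    (hx : x = (w₁ + γ • d) * w₂ + α • (d * d) ∨ x = (1 - q) • (d * w₂) - β • (d * d)) :
    d * w₁' * x * f * w₂ * w₃ = x * (1 + q • (f * d * w₂)) := by
  have h₁ : d * w₁ = w₄ * d := by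
    simp only [hw₁, hw₄, mul_add, add_mul, mul_one, one_mul, mul_smul_comm, smul_mul_assoc,
      mul_assoc]
  have h₂ : d * w₂ = w₁ * d := by
    simp only [hw₁, hw₂, mul_add, add_mul, mul_one, one_mul, mul_smul_comm, smul_mul_assoc,
      mul_assoc]
  have hs : d * (f * w₂ * w₃) = w₂ * (1 + q • (f * d * w₂)) := by
    rw [hw₂, hw₃, ← qWeyl_mul_W₂_mul_W₃ hdf β]
    simp only [mul_assoc]
  suffices key : d * x * (f * w₂ * w₃) = w₄ * x * (1 + q • (f * d * w₂)) by
    apply hw₄_reg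
    calc w₄ * (d * w₁' * x * f * w₂ * w₃) = d * w₁ * w₁' * x * (f * w₂ * w₃) := by
          simp only [h₁, mul_assoc]
      _ = w₄ * (x * (1 + q • (f * d * w₂))) := by
          rw [mul_assoc d, hw₁', mul_one, key, mul_assoc]
  obtain ⟨a, b, c, rfl⟩ : ∃ a b c : ℝ, a • (w₁ * w₂) + b • (d * w₂) + c • (d * d) = x := by
    rcases hx with rfl | rfl
    · exact ⟨1, γ, α, by simp only [add_mul, smul_mul_assoc, one_smul]⟩
    · exact ⟨0, 1 - q, -β, by simp only [zero_smul, zero_add, neg_smul, sub_eq_add_neg]⟩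
  exact mul_span_mul_eq h₁ h₂ hs a b c

end QWeyl

namespace PolySeq

def toEnd (P : PolySeq) : Module.End ℝ ℝ[X] :=
  Polynomial.lsum fun n => LinearMap.id.smulRight (P n)

theorem toEnd_apply (P : PolySeq) (p : ℝ[X]) : toEnd P p = p.sum fun j c => c • P j := rfl

theorem qmul_apply (P Q : PolySeq) (n : ℕ) : qmul P Q n = toEnd P (Q n) := rfl

@[simp]
theorem toEnd_monomial (P : PolySeq) (n : ℕ) (c : ℝ) : toEnd P (monomial n c) = c • P n := by
  simp [toEnd_apply, sum_monomial_index]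

@[simp]
theorem toEnd_X_pow (P : PolySeq) (n : ℕ) : toEnd P (X ^ n) = P n := by
  rw [X_pow_eq_monomial, toEnd_monomial, one_smul]

@[simp]
theorem toEnd_C_mul_X_pow (P : PolySeq) (c : ℝ) (n : ℕ) : toEnd P (C c * X ^ n) = c • P n := by
  rw [C_mul_X_pow_eq_monomial, toEnd_monomial]

theorem toEnd_injective : Function.Injective toEnd := fun P Q h =>
  funext fun n => by simpa using LinearMap.congr_fun h (X ^ n)

@[simp]
theorem toEnd_qmul (P Q : PolySeq) : toEnd (qmul P Q) = toEnd P * toEnd Q :=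
  lhom_ext_X_pow fun n => by simp [qmul_apply]

@[simp]
theorem toEnd_Eseq : toEnd Eseq = 1 := lhom_ext_X_pow fun n => by simp [Eseq]

@[simp]
theorem toEnd_add (P Q : PolySeq) : toEnd (P + Q) = toEnd P + toEnd Q :=
  lhom_ext_X_pow fun n => by simp

@[simp]
theorem toEnd_sub (P Q : PolySeq) : toEnd (P - Q) = toEnd P - toEnd Q :=
  lhom_ext_X_pow fun n => by simp

@[simp]
theorem toEnd_smul (c : ℝ) (P : PolySeq) : toEnd (c • P) = c • toEnd P :=
  lhom_ext_X_pow fun n => by simp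

theorem toEnd_Dq_mul_toEnd_Fseq (q : ℝ) :
    toEnd (Dq q) * toEnd Fseq = q • (toEnd Fseq * toEnd (Dq q)) + 1 := by
  refine lhom_ext_X_pow fun n => ?_
  simp only [LinearMap.add_apply, LinearMap.smul_apply, Module.End.mul_apply,
    Module.End.one_apply, toEnd_X_pow, Fseq, Dq, toEnd_C_mul_X_pow, Nat.add_sub_cancel, qnum_succ]
  cases n with
  | zero => simp [qnum]
  | succ n => simp only [Nat.add_sub_cancel, smul_eq_C_mul, map_add, map_mul, map_one]; ring

theorem degree_toEnd_lt {G : PolySeq} (hG : ∀ j, (G j).degree < j) {p : ℝ[X]} (hp : p ≠ 0) :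
    (toEnd G p).degree < p.degree := by
  rw [toEnd_apply, Polynomial.sum]
  refine (degree_sum_le _ _).trans_lt ?_
  rw [Finset.sup_lt_iff (bot_lt_iff_ne_bot.mpr (degree_ne_bot.mpr hp))]
  exact fun j hj => ((degree_smul_le _ _).trans_lt (hG j)).trans_le
    (le_degree_of_ne_zero (mem_support_iff.mp hj))

theorem isLeftRegular_one_add_smul_toEnd {G : PolySeq} (hG : ∀ j, (G j).degree < j) (c : ℝ) :
    IsLeftRegular (1 + c • toEnd G) := by
  have hinj : Function.Injective ⇑(1 + c • toEnd G) := by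
    rw [← LinearMap.ker_eq_bot, LinearMap.ker_eq_bot']
    intro p hp
    by_contra hp0
    have hp' : p = -c • toEnd G p := by
      rw [neg_smul, eq_neg_iff_add_eq_zero]
      simpa using hp
    have hle := degree_smul_le (-c) (toEnd G p)
    rw [← hp'] at hle
    exact (degree_toEnd_lt hG hp0).not_ge hle
  exact fun A B h => LinearMap.ext fun p => hinj (LinearMap.congr_fun h p)

theorem degree_Dq_lt (q : ℝ) (n : ℕ) : (Dq q n).degree < n := by
  cases n with
  | zero => simp [Dq, qnum]
  | succ n => exact (degree_C_mul_X_pow_le _ _).trans_lt (by exact_mod_cast n.lt_succ_self)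

theorem isLeftRegular_toEnd_W4 (β q : ℝ) : IsLeftRegular (toEnd (W4 β q)) := by
  have hG (j : ℕ) : ((qmul (Dq2 q) Fseq) j).degree < j := by
    simpa [qmul_apply, Dq2, Fseq, Dq] using (degree_smul_le _ _).trans_lt (degree_Dq_lt q j)
  simpa [W4] using isLeftRegular_one_add_smul_toEnd hG β

end PolySeq

open PolySeq in
theorem stmt16_general (α β γ q : ℝ)
    (W1inv : PolySeq) (h1 : qmul (W1 β q) W1inv = Eseq) :
    ∀ Xc ∈ ({RelQ α β γ q, Qel β q} : Set PolySeq),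
      qmul (qmul (qmul (qmul (qmul (Dq q) W1inv) Xc) Fseq) (W2 β q)) (W3 β q) =
        qmul Xc (Eseq + q • qmul (qmul Fseq (Dq q)) (W2 β q)) := by
  intro Xc hXc
  apply toEnd_injective
  simp only [toEnd_qmul, toEnd_add, toEnd_smul, toEnd_Eseq]
  refine qWeyl_mul_inv_W₁_mul_eq (toEnd_Dq_mul_toEnd_Fseq q) (α := α) (β := β) (γ := γ)
    ?_ ?_ ?_ ?_ (isLeftRegular_toEnd_W4 β q) (by rw [← toEnd_qmul, h1, toEnd_Eseq]) ?_
  · simp [W1]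
  · simp [W2, Dq2]
  · simp [W3, Dq2]
  · simp [W4, Dq2]
  · rcases hXc with rfl | rfl
    · exact .inl (by simp [RelQ, Dq2])
    · exact .inr (by simp [Qel, Dq2])

/-- For `X ∈ {R, Q'}`: `D_q W₁⁻¹ X F W₂ W₃ = X (E + q F D_q W₂)`. -/
theorem stmt16 (α β γ q : ℝ) (hq : q ∈ Set.Icc (-1 : ℝ) 1)
    (W1inv : PolySeq) (h1 : qmul (W1 β q) W1inv = Eseq) (h2 : qmul W1inv (W1 β q) = Eseq) :
    ∀ Xc ∈ ({RelQ α β γ q, Qel β q} : Set PolySeq),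
      qmul (qmul (qmul (qmul (qmul (Dq q) W1inv) Xc) Fseq) (W2 β q)) (W3 β q) =
        qmul Xc (Eseq + q • qmul (qmul Fseq (Dq q)) (W2 β q)) :=
  stmt16_general α β γ q W1inv h1
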